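/- Let f ∈ L_p[0,1] (1 ≤ p < ∞) be self-similar of zero spectral order with d_{k̂} = 1. Then for every m ≥ 1 and every index i ≠ k̂, f equals the constant (m−1)·β_{k̂} + β_i almost everywhere on the interval I(m,i) = S^{m−1}([α_i, α_{i+1}]), where S(x) = a_{k̂}x + α_{k̂}. -/

import Mathlib

/-!
On a cell `[α_i, α_{i+1}]` with `i ≠ k̂` the fixed-point equation reads `f = β_i`, because
`d_i = 0`. The map `S` sends `[0,1]` onto the cell of `k̂`, where the fixed-point equation reads
`f x = β_{k̂} + f (S⁻¹ x)`. As `S⁻¹` is affine, preimages of null sets under it are null, so if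
`f` is a.e. constant on a set `A ⊆ [0,1]`, it is a.e. constant on `S '' A`, with `β_{k̂}` added.
-/

open MeasureTheory Set Filter
open scoped ENNReal NNReal

/-- Breakpoints: `alphaOf a k = α_k = ∑_{i=1}^{k-1} a_i`, so `α_1 = 0`. -/
noncomputable def alphaOf (a : ℕ → ℝ) (k : ℕ) : ℝ := ∑ i ∈ Finset.Ico 1 k, a i

/-- The similarity operator `G`: on `(α_k, α_{k+1})` it takes the value
`β_k + d_k · f((x − α_k)/a_k)`, and `0` outside `⋃ (α_k, α_{k+1})`. -/
noncomputable def simOp (n : ℕ) (a d β : ℕ → ℝ) (f : ℝ → ℝ) : ℝ → ℝ :=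
  fun x => ∑ k ∈ Finset.Icc 1 n,
    Set.indicator (Set.Ioo (alphaOf a k) (alphaOf a (k + 1)))
      (fun y => β k + d k * f ((y - alphaOf a k) / a k)) x

section AffineTransport

variable {f : ℝ → ℝ} {s t : ℝ}

theorem quasiMeasurePreserving_sub_div (hs : s ≠ 0) :
    Measure.QuasiMeasurePreserving (fun x : ℝ => (x - t) / s) volume volume := by
  have h := (Measure.quasiMeasurePreserving_smul volume (inv_ne_zero hs)).comp
    (measurePreserving_sub_right volume t).quasiMeasurePreserving
  convert h using 2 with x
  simp [div_eq_inv_mul]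

theorem ae_eq_const_of_ae_eq_add_mul_comp_sub_div {A B : Set ℝ} {b e c : ℝ} (hs : s ≠ 0)
    (hmaps : MapsTo (fun x => (x - t) / s) B A)
    (hrel : ∀ᵐ x ∂volume.restrict B, f x = b + e * f ((x - t) / s))
    (hA : f =ᵐ[volume.restrict A] fun _ => c) :
    f =ᵐ[volume.restrict B] fun _ => b + e * c := by
  filter_upwards [hrel, ((quasiMeasurePreserving_sub_div hs).restrict hmaps).ae hA]
    with x hx hcx
  rw [hx, hcx]

theorem ae_eq_const_on_iterate_affine_image {A C : Set ℝ} {b c : ℝ} (hs : s ≠ 0)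
    (hAC : A ⊆ C) (hC : MapsTo (fun x => s * x + t) C C)
    (hrel : ∀ᵐ x ∂volume.restrict ((fun x => s * x + t) '' C), f x = b + f ((x - t) / s))
    (hA : f =ᵐ[volume.restrict A] fun _ => c) (j : ℕ) :
    f =ᵐ[volume.restrict ((fun x => s * x + t)^[j] '' A)] fun _ => j * b + c := by
  induction j with
  | zero => simpa using hA
  | succ j ih =>
    set S : ℝ → ℝ := fun x => s * x + t
    have hsub : S^[j] '' A ⊆ C := (hC.iterate j).image_subset.trans' (image_mono hAC)
    have hmaps : MapsTo (fun x => (x - t) / s) (S '' (S^[j] '' A)) (S^[j] '' A) := by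
      rintro _ ⟨y, hy, rfl⟩
      simpa [S, hs] using hy
    rw [Function.iterate_succ', image_comp]
    have hrel' := ae_restrict_of_ae_restrict_of_subset (image_mono hsub) hrel
    refine (ae_eq_const_of_ae_eq_add_mul_comp_sub_div hs hmaps (e := 1) (by simpa using hrel')
      ih).mono fun x hx => ?_
    rw [hx]
    push_cast
    ring

end AffineTransport

section Cells

variable {n : ℕ} {a : ℕ → ℝ}

theorem alphaOf_succ (a : ℕ → ℝ) {k : ℕ} (hk : 1 ≤ k) :
    alphaOf a (k + 1) = alphaOf a k + a k :=
  Finset.sum_Ico_succ_top hk a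

theorem alphaOf_mono (ha : ∀ k ∈ Finset.Icc 1 n, 0 ≤ a k) {j k : ℕ} (hjk : j ≤ k)
    (hk : k ≤ n + 1) : alphaOf a j ≤ alphaOf a k :=
  Finset.sum_le_sum_of_subset_of_nonneg (Finset.Ico_subset_Ico_right hjk) fun i hi _ => by
    obtain ⟨hi1, hik⟩ := Finset.mem_Ico.mp hi
    exact ha i (Finset.mem_Icc.mpr ⟨hi1, by omega⟩)

theorem alphaOf_succ_eq_one (hsum : ∑ k ∈ Finset.Icc 1 n, a k = 1) : alphaOf a (n + 1) = 1 := by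
  rw [alphaOf, Finset.Ico_add_one_right_eq_Icc, hsum]

theorem Icc_alphaOf_subset_unitInterval (ha : ∀ k ∈ Finset.Icc 1 n, 0 ≤ a k)
    (hsum : ∑ k ∈ Finset.Icc 1 n, a k = 1) {k : ℕ} (hk : k ∈ Finset.Icc 1 n) :
    Icc (alphaOf a k) (alphaOf a (k + 1)) ⊆ Icc 0 1 := by
  obtain ⟨-, hkn⟩ := Finset.mem_Icc.mp hk
  have h0 : alphaOf a 0 ≤ alphaOf a k := alphaOf_mono ha (Nat.zero_le k) (by omega)
  have h1 : alphaOf a (k + 1) ≤ alphaOf a (n + 1) := alphaOf_mono ha (by omega) le_rfl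
  rw [alphaOf_succ_eq_one hsum] at h1
  simp only [alphaOf, Finset.Ico_eq_empty_of_le zero_le_one, Finset.sum_empty] at h0
  exact Icc_subset_Icc h0 h1

theorem simOp_eq_of_mem_Ioo (ha : ∀ k ∈ Finset.Icc 1 n, 0 ≤ a k) (d β : ℕ → ℝ) (f : ℝ → ℝ)
    {k : ℕ} (hk : k ∈ Finset.Icc 1 n) {x : ℝ} (hx : x ∈ Ioo (alphaOf a k) (alphaOf a (k + 1))) :
    simOp n a d β f x = β k + d k * f ((x - alphaOf a k) / a k) := by
  obtain ⟨hk1, hkn⟩ := Finset.mem_Icc.mp hk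
  rw [simOp, Finset.sum_eq_single_of_mem k hk, indicator_of_mem hx]
  intro j hj hjk
  obtain ⟨hj1, hjn⟩ := Finset.mem_Icc.mp hj
  refine indicator_of_notMem (fun hxj => ?_) _
  rcases lt_or_gt_of_ne hjk with hlt | hgt
  · have : alphaOf a (j + 1) ≤ alphaOf a k := alphaOf_mono ha (by omega) (by omega)
    linarith [hx.1, hxj.2]
  · have : alphaOf a (k + 1) ≤ alphaOf a j := alphaOf_mono ha (by omega) (by omega)
    linarith [hx.2, hxj.1]

theorem ae_restrict_Icc_alphaOf_of_ae_eq_simOp {d β : ℕ → ℝ} {f : ℝ → ℝ}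
    (ha : ∀ k ∈ Finset.Icc 1 n, 0 ≤ a k) (hsum : ∑ k ∈ Finset.Icc 1 n, a k = 1)
    (hfix : f =ᵐ[volume.restrict (Icc (0 : ℝ) 1)] simOp n a d β f)
    {k : ℕ} (hk : k ∈ Finset.Icc 1 n) :
    ∀ᵐ x ∂volume.restrict (Icc (alphaOf a k) (alphaOf a (k + 1))),
      f x = β k + d k * f ((x - alphaOf a k) / a k) := by
  rw [← restrict_Ioo_eq_restrict_Icc]
  have hsub := Ioo_subset_Icc_self.trans (Icc_alphaOf_subset_unitInterval ha hsum hk)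
  filter_upwards [ae_restrict_of_ae_restrict_of_subset hsub hfix,
    ae_restrict_mem measurableSet_Ioo] with x hfx hx
  rw [hfx, simOp_eq_of_mem_Ioo ha d β f hk hx]

end Cells

theorem selfSimilar_zeroOrder_const_on_Imi_of_d_eq_one_general
    (n : ℕ) (a d β : ℕ → ℝ)
    (ha : ∀ k ∈ Finset.Icc 1 n, 0 < a k)
    (hsum : ∑ k ∈ Finset.Icc 1 n, a k = 1)
    (khat : ℕ) (hk : khat ∈ Finset.Icc 1 n)
    (hd0 : ∀ k ∈ Finset.Icc 1 n, k ≠ khat → d k = 0)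
    (f : ℝ → ℝ)
    (hfix : f =ᵐ[volume.restrict (Set.Icc (0:ℝ) 1)] simOp n a d β f)
    (hdone : d khat = 1)
    (S : ℝ → ℝ) (hS : S = fun x => a khat * x + alphaOf a khat) :
    ∀ m : ℕ, 1 ≤ m → ∀ i ∈ Finset.Icc 1 n, i ≠ khat →
      f =ᵐ[volume.restrict ((S^[m - 1]) '' Set.Icc (alphaOf a i) (alphaOf a (i + 1)))]
        (fun _ => ((m : ℝ) - 1) * β khat + β i) := by
  subst hS
  intro m hm i hi hik
  have ha₀ : ∀ k ∈ Finset.Icc 1 n, 0 ≤ a k := fun k hk => (ha k hk).le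
  have himage : (fun x => a khat * x + alphaOf a khat) '' Icc 0 1 =
      Icc (alphaOf a khat) (alphaOf a (khat + 1)) := by
    rw [image_affine_Icc' (ha khat hk), alphaOf_succ a (Finset.mem_Icc.mp hk).1]
    ring_nf
  have hrel : ∀ᵐ x ∂volume.restrict ((fun x => a khat * x + alphaOf a khat) '' Icc 0 1),
      f x = β khat + f ((x - alphaOf a khat) / a khat) := by
    simpa [himage, hdone] using ae_restrict_Icc_alphaOf_of_ae_eq_simOp ha₀ hsum hfix hk
  have hconst : f =ᵐ[volume.restrict (Icc (alphaOf a i) (alphaOf a (i + 1)))] fun _ => β i := by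
    filter_upwards [ae_restrict_Icc_alphaOf_of_ae_eq_simOp ha₀ hsum hfix hi] with x hx
    simp [hx, hd0 i hi hik]
  have hmaps : MapsTo (fun x => a khat * x + alphaOf a khat) (Icc 0 1) (Icc 0 1) :=
    mapsTo_iff_image_subset.mpr (himage ▸ Icc_alphaOf_subset_unitInterval ha₀ hsum hk)
  simpa [Nat.cast_sub hm] using ae_eq_const_on_iterate_affine_image (ha khat hk).ne'
    (Icc_alphaOf_subset_unitInterval ha₀ hsum hi) hmaps hrel hconst (m - 1)

/-- if `d_{k̂} = 1`, then on each interval `I(m,i) = S^{m−1}([α_i, α_{i+1}])`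
(`i ≠ k̂`, `m ≥ 1`) the self-similar function of zero spectral order is a.e. equal to the
constant `(m−1)·β_{k̂} + β_i`. -/
theorem selfSimilar_zeroOrder_const_on_Imi_of_d_eq_one
    (n : ℕ) (hn : 1 < n) (a d β : ℕ → ℝ)
    (ha : ∀ k ∈ Finset.Icc 1 n, 0 < a k)
    (hsum : ∑ k ∈ Finset.Icc 1 n, a k = 1)
    (p : ℝ≥0∞) (hp1 : 1 ≤ p) (hpt : p ≠ ⊤)
    (khat : ℕ) (hk : khat ∈ Finset.Icc 1 n)
    (hdk : d khat ≠ 0)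
    (hd0 : ∀ k ∈ Finset.Icc 1 n, k ≠ khat → d k = 0)
    (hβ : ∃ k ∈ Finset.Icc 1 n, β k ≠ 0)
    (hcontr : a khat * |d khat| ^ p.toReal < 1)
    (f : ℝ → ℝ) (hf : MemLp f p (volume.restrict (Set.Icc (0:ℝ) 1)))
    (hfix : f =ᵐ[volume.restrict (Set.Icc (0:ℝ) 1)] simOp n a d β f)
    (hdone : d khat = 1)
    (S : ℝ → ℝ) (hS : S = fun x => a khat * x + alphaOf a khat) :
    ∀ m : ℕ, 1 ≤ m → ∀ i ∈ Finset.Icc 1 n, i ≠ khat →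
      f =ᵐ[volume.restrict ((S^[m - 1]) '' Set.Icc (alphaOf a i) (alphaOf a (i + 1)))]
        (fun _ => ((m : ℝ) - 1) * β khat + β i) :=
  selfSimilar_zeroOrder_const_on_Imi_of_d_eq_one_general n a d β ha hsum khat hk hd0 f hfix hdone S
    hS
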